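/- arXiv:2209.09820 — 5 statements merged into one kernel-verified Lean document; each statement's English description precedes it below -/
import Mathlib

section
/- For the binary entropy function h₁(t) = −t ln t − (1−t) ln(1−t) (with h₁(0) = h₁(1) = 0), the functional I(h₁) = (1/(4π²)) ∫₀¹ (h₁(t) − t·h₁(1)) / (t(1−t)) dt equals 1/12. -/
/-!
On `(0, 1)`, `h₁(t) / (t (1 - t)) = -log (1 - t) / t - log t / (1 - t)`, and expanding both
logarithms gives the series `∑ₙ (tⁿ + (1 - t)ⁿ) / (n + 1)` of nonnegative terms. Integrating
termwise over `[0, 1]` yields `∑ₙ 2 / (n + 1)² = 2 ζ(2) = π² / 3`, and `(π² / 3) / (4 π²) = 1 / 12`.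
-/

open MeasureTheory Set Real

theorem Real.hasSum_pow_div_neg_log_one_sub {x : ℝ} (hx : |x| < 1) (hx₀ : x ≠ 0) :
    HasSum (fun n : ℕ ↦ x ^ n / (n + 1)) (-log (1 - x) / x) := by
  refine ((hasSum_pow_div_log_of_abs_lt_one hx).div_const x).congr_fun fun n ↦ ?_
  rw [pow_succ, mul_div_right_comm, mul_div_cancel_right₀ _ hx₀]

theorem Real.hasSum_binEntropy_div {t : ℝ} (ht : t ∈ Ioo 0 1) :
    HasSum (fun n : ℕ ↦ (t ^ n + (1 - t) ^ n) / (n + 1)) (binEntropy t / (t * (1 - t))) := by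
  obtain ⟨ht₀, ht₁⟩ := ht
  have ht₁' : 0 < 1 - t := sub_pos.2 ht₁
  have hs := (hasSum_pow_div_neg_log_one_sub (abs_lt.2 ⟨by linarith, ht₁⟩) ht₀.ne').add
    (hasSum_pow_div_neg_log_one_sub (x := 1 - t) (abs_lt.2 ⟨by linarith, by linarith⟩) ht₁'.ne')
  simp only [← add_div, sub_sub_cancel] at hs
  convert hs using 1
  have := ht₁'.ne'
  rw [binEntropy, log_inv, log_inv]
  field_simp
  ring

theorem integral_pow_add_one_sub_pow_div (n : ℕ) :
    ∫ t in (0 : ℝ)..1, (t ^ n + (1 - t) ^ n) / (n + 1) = 2 / ((n : ℝ) + 1) ^ 2 := by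
  have h_reflect : ∫ t in (0 : ℝ)..1, (1 - t) ^ n = ∫ t in (0 : ℝ)..1, t ^ n := by
    simpa using intervalIntegral.integral_comp_sub_left (fun t : ℝ ↦ t ^ n) (a := 0) (b := 1) 1
  rw [intervalIntegral.integral_div, intervalIntegral.integral_add
    ((continuous_pow n).intervalIntegrable 0 1) (by apply Continuous.intervalIntegrable; fun_prop),
    h_reflect, integral_pow]
  field_simp
  ring

theorem hasSum_two_div_succ_sq : HasSum (fun n : ℕ ↦ 2 / ((n : ℝ) + 1) ^ 2) (π ^ 2 / 3) := by
  have h := ((hasSum_nat_add_iff' 1).2 hasSum_zeta_two).mul_left 2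
  rw [Finset.sum_range_one] at h
  norm_num at h
  rw [show π ^ 2 / 3 = 2 * (π ^ 2 / 6) by ring]
  exact h.congr_fun fun n ↦ div_eq_mul_inv _ _

theorem integral_binEntropy_div : ∫ t in (0 : ℝ)..1, binEntropy t / (t * (1 - t)) = π ^ 2 / 3 := by
  set F : ℕ → ℝ → ℝ := fun n t ↦ (t ^ n + (1 - t) ^ n) / (n + 1)
  have hF_nonneg (n : ℕ) {t : ℝ} (ht : t ∈ Ioo (0 : ℝ) 1) : 0 ≤ F n t := by
    have := ht.1.le; have := ht.2.le
    positivity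
  have hF_int (n : ℕ) : ∫ t in Ioo (0 : ℝ) 1, F n t = 2 / ((n : ℝ) + 1) ^ 2 := by
    rw [← integral_Ioc_eq_integral_Ioo, ← intervalIntegral.integral_of_le zero_le_one]
    exact integral_pow_add_one_sub_pow_div n
  have hF_integrable (n : ℕ) : IntegrableOn (F n) (Ioo 0 1) :=
    (Continuous.integrableOn_Icc (by fun_prop)).mono_set Ioo_subset_Icc_self
  have hF_norm (n : ℕ) : ∫ t in Ioo (0 : ℝ) 1, ‖F n t‖ = 2 / ((n : ℝ) + 1) ^ 2 := by
    rw [← hF_int n]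
    exact setIntegral_congr_fun measurableSet_Ioo fun t ht ↦ norm_of_nonneg (hF_nonneg n ht)
  have hsum := hasSum_integral_of_summable_integral_norm hF_integrable
    (by simpa only [hF_norm] using hasSum_two_div_succ_sq.summable)
  simp only [hF_int] at hsum
  rw [intervalIntegral.integral_of_le zero_le_one, integral_Ioc_eq_integral_Ioo,
    hasSum_two_div_succ_sq.unique hsum]
  exact setIntegral_congr_fun measurableSet_Ioo fun t ht ↦ (hasSum_binEntropy_div ht).tsum_eq.symm

/-- For the binary entropy function `h₁(t) = −t ln t − (1−t) ln(1−t)` (with `h₁(1) = 0`),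
the functional `I(h₁) = (1/(4π²)) ∫₀¹ (h₁(t) − t h₁(1))/(t(1−t)) dt` equals `1/12`. -/
theorem functional_I_entropy :
    (1 / (4 * Real.pi ^ 2)) * ∫ t in (0:ℝ)..1,
      ((-t * Real.log t - (1 - t) * Real.log (1 - t))
        - t * (-1 * Real.log 1 - (1 - 1) * Real.log (1 - 1))) / (t * (1 - t))
      = 1 / 12 := by
  have h_integrand (t : ℝ) : ((-t * log t - (1 - t) * log (1 - t))
      - t * (-1 * log 1 - (1 - 1) * log (1 - 1))) / (t * (1 - t))
      = binEntropy t / (t * (1 - t)) := by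
    simp only [binEntropy, log_inv, log_one]
    ring
  simp only [h_integrand, integral_binEntropy_div]
  field_simp
  ring
end

section
/- Let f : ℝ⁺ → ℝ⁺ be bounded with f(L) → 0 as L → ∞. Then there exists a convex, non-increasing function E : ℝ⁺ → ℝ⁺ with E(0) = 1, E(L) → 0 as L → ∞, f(L)/E(L) → 0 as L → ∞, and E(L) ≥ C/√(ln(2+L)) for some constant C > 0 and all L ≥ 0. -/
/-!
With `q x = √(f x) + 1 / √(log (2 + x))`, which is bounded, positive and tends to `0`, take
`E₀ x = ⨆_{t ≥ 0} q t * ramp t x`, where `ramp t` is the convex non-increasing hinge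
`max 0 (2 - x / (t + 1))`, at least `1` at `x = t` and vanishing from `x = 2 (t + 1)` on.
As a supremum of convex non-increasing functions `E₀` is convex and non-increasing, and `E₀ ≥ q`.
It tends to `0` because at large `x` every ramp started before a fixed time has vanished and every
ramp started later has small height. Then `E = E₀ / E₀ 0` works: `√f ≤ E₀` gives
`f / E ≤ E₀ 0 * √f → 0`, and `1 / √(log (2 + x)) ≤ E₀` is the lower bound.
-/

open Set Filter Topology Real

section ciSup

variable {ι E : Type*} [Nonempty ι] {f : ι → E → ℝ}

theorem ConvexOn.ciSup [AddCommMonoid E] [Module ℝ E] {s : Set E} (hf : ∀ i, ConvexOn ℝ s (f i))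
    (hbdd : ∀ x ∈ s, BddAbove (range fun i => f i x)) : ConvexOn ℝ s fun x => ⨆ i, f i x := by
  refine ⟨(hf (Classical.arbitrary ι)).1, fun x hx y hy a b ha hb hab => ciSup_le fun i => ?_⟩
  simp only [smul_eq_mul]
  calc f i (a • x + b • y) ≤ a * f i x + b * f i y := (hf i).2 hx hy ha hb hab
    _ ≤ a * (⨆ i, f i x) + b * ⨆ i, f i y := by
      gcongr
      exacts [le_ciSup (hbdd x hx) i, le_ciSup (hbdd y hy) i]

theorem AntitoneOn.ciSup [Preorder E] {s : Set E} (hf : ∀ i, AntitoneOn (f i) s)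
    (hbdd : ∀ x ∈ s, BddAbove (range fun i => f i x)) : AntitoneOn (fun x => ⨆ i, f i x) s :=
  fun x hx _ hy hxy => ciSup_le fun i => (hf i hx hy hxy).trans (le_ciSup (hbdd x hx) i)

end ciSup

noncomputable def ramp (t x : ℝ) : ℝ := max 0 (2 - x / (t + 1))

section ramp

variable {t x : ℝ}

theorem ramp_nonneg : 0 ≤ ramp t x := le_max_left _ _

theorem convexOn_ramp : ConvexOn ℝ univ (ramp t) :=
  (convexOn_const 0 convex_univ).sup ⟨convex_univ, fun x _ y _ a b _ _ hab =>
    le_of_eq (by simp only [smul_eq_mul]; linear_combination (-2 : ℝ) * hab)⟩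

theorem antitone_ramp (ht : 0 ≤ t) : Antitone (ramp t) := fun _ _ hxy => by
  unfold ramp
  gcongr

theorem ramp_le_two (ht : 0 ≤ t) (hx : 0 ≤ x) : ramp t x ≤ 2 := by
  have : 0 ≤ x / (t + 1) := by positivity
  exact max_le zero_le_two (by linarith)

theorem one_le_ramp_self (ht : 0 ≤ t) : 1 ≤ ramp t t := by
  have : t / (t + 1) ≤ 1 := (div_le_one (by positivity)).2 (by linarith)
  exact le_max_of_le_right (by linarith)

theorem ramp_eq_zero (ht : 0 ≤ t) (hx : 2 * (t + 1) ≤ x) : ramp t x = 0 := by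
  have : 2 ≤ x / (t + 1) := (le_div_iff₀ (by positivity)).2 hx
  exact max_eq_left (by linarith)

end ramp

noncomputable def rampSup (q : ℝ → ℝ) (x : ℝ) : ℝ := ⨆ t : Ici (0 : ℝ), q t * ramp t x

section rampSup

variable {q : ℝ → ℝ} {M x : ℝ} (hq0 : ∀ t, 0 ≤ t → 0 ≤ q t) (hqM : ∀ t, 0 ≤ t → q t ≤ M)
include hq0 hqM

theorem bddAbove_range_mul_ramp (hx : 0 ≤ x) :
    BddAbove (range fun t : Ici (0 : ℝ) => q t * ramp t x) :=
  ⟨M * 2, forall_mem_range.2 fun t => mul_le_mul (hqM t t.2) (ramp_le_two t.2 hx) ramp_nonneg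
    ((hq0 t t.2).trans (hqM t t.2))⟩

theorem le_rampSup (hx : 0 ≤ x) : q x ≤ rampSup q x :=
  calc q x ≤ q x * ramp x x := le_mul_of_one_le_right (hq0 x hx) (one_le_ramp_self hx)
    _ ≤ rampSup q x := le_ciSup (bddAbove_range_mul_ramp hq0 hqM hx) ⟨x, hx⟩

theorem convexOn_rampSup : ConvexOn ℝ (Ici 0) (rampSup q) :=
  ConvexOn.ciSup (fun t => (convexOn_ramp.subset (subset_univ _) (convex_Ici 0)).smul (hq0 t t.2))
    fun _ hx => bddAbove_range_mul_ramp hq0 hqM hx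

theorem antitoneOn_rampSup : AntitoneOn (rampSup q) (Ici 0) :=
  AntitoneOn.ciSup (fun t => ((antitone_ramp t.2).const_mul (hq0 t t.2)).antitoneOn _)
    fun _ hx => bddAbove_range_mul_ramp hq0 hqM hx

theorem tendsto_rampSup (hq : Tendsto q atTop (𝓝 0)) : Tendsto (rampSup q) atTop (𝓝 0) := by
  refine tendsto_order.2 ⟨fun a ha => ?_, fun a ha => ?_⟩
  · filter_upwards [eventually_ge_atTop 0] with x hx
    exact ha.trans_le ((hq0 x hx).trans (le_rampSup hq0 hqM hx))
  · obtain ⟨T, hT⟩ := eventually_atTop.1 ((hq.eventually_lt_const (by positivity : 0 < a / 3)).and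
      (eventually_ge_atTop 0))
    filter_upwards [eventually_ge_atTop (2 * (T + 1))] with x hx
    have hx0 : 0 ≤ x := le_trans (by linarith [(hT T le_rfl).2]) hx
    refine lt_of_le_of_lt (ciSup_le fun t => ?_) (by linarith : a / 3 * 2 < a)
    rcases le_total (t : ℝ) T with htT | hTt
    · rw [ramp_eq_zero t.2 (by linarith), mul_zero]
      positivity
    · exact mul_le_mul (hT t hTt).1.le (ramp_le_two t.2 hx0) ramp_nonneg (by positivity)

theorem exists_convexOn_antitoneOn_ge_of_tendsto_zero (hq : Tendsto q atTop (𝓝 0)) :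
    ∃ E : ℝ → ℝ, ConvexOn ℝ (Ici 0) E ∧ AntitoneOn E (Ici 0) ∧ Tendsto E atTop (𝓝 0) ∧
      ∀ x, 0 ≤ x → q x ≤ E x :=
  ⟨rampSup q, convexOn_rampSup hq0 hqM, antitoneOn_rampSup hq0 hqM, tendsto_rampSup hq0 hqM hq,
    fun _ hx => le_rampSup hq0 hqM hx⟩

end rampSup

theorem div_le_sqrt_of_sqrt_le {a b : ℝ} (hb : 0 < b) (h : √a ≤ b) : a / b ≤ √a := by
  rw [div_le_iff₀ hb]
  rcases le_total a 0 with ha | ha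
  · exact ha.trans (by positivity)
  · calc a = √a * √a := (mul_self_sqrt ha).symm
      _ ≤ √a * b := by gcongr

theorem inv_sqrt_log_two_add_pos {x : ℝ} (hx : 0 ≤ x) : 0 < (√(log (2 + x)))⁻¹ := by
  have : 0 < log (2 + x) := log_pos (by linarith)
  positivity

theorem tendsto_inv_sqrt_log_two_add : Tendsto (fun x => (√(log (2 + x)))⁻¹) atTop (𝓝 0) :=
  tendsto_inv_atTop_zero.comp <| tendsto_sqrt_atTop.comp <| tendsto_log_atTop.comp <|
    tendsto_atTop_add_const_left _ 2 tendsto_id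

/-- Convex decaying envelope lemma. -/
theorem convex_envelope_exists (f : ℝ → ℝ) (hpos : ∀ x, 0 ≤ x → 0 < f x)
    (hbdd : ∃ M : ℝ, ∀ x, 0 ≤ x → f x ≤ M)
    (hlim : Filter.Tendsto f Filter.atTop (nhds 0)) :
    ∃ E : ℝ → ℝ, ConvexOn ℝ (Set.Ici 0) E ∧ AntitoneOn E (Set.Ici 0) ∧
      E 0 = 1 ∧ (∀ x, 0 ≤ x → 0 < E x) ∧
      Filter.Tendsto E Filter.atTop (nhds 0) ∧
      Filter.Tendsto (fun x => f x / E x) Filter.atTop (nhds 0) ∧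
      ∃ C : ℝ, 0 < C ∧ ∀ x, 0 ≤ x → C / Real.sqrt (Real.log (2 + x)) ≤ E x := by
  obtain ⟨M, hM⟩ := hbdd
  obtain ⟨E, hconv, hanti, hE, hqE⟩ :=
    exists_convexOn_antitoneOn_ge_of_tendsto_zero (q := fun x => √(f x) + (√(log (2 + x)))⁻¹)
      (fun _ _ => by positivity)
      (fun t ht => add_le_add (sqrt_le_sqrt (hM t ht)) <|
        inv_anti₀ (sqrt_pos.2 (log_pos one_lt_two)) <| sqrt_le_sqrt (log_le_log two_pos (by linarith)))
      (by simpa using hlim.sqrt.add tendsto_inv_sqrt_log_two_add)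
  have hsqrt_le : ∀ x, 0 ≤ x → √(f x) ≤ E x := fun x hx =>
    (le_add_of_nonneg_right (inv_sqrt_log_two_add_pos hx).le).trans (hqE x hx)
  have hinv_le : ∀ x, 0 ≤ x → (√(log (2 + x)))⁻¹ ≤ E x := fun x hx =>
    (le_add_of_nonneg_left (sqrt_nonneg _)).trans (hqE x hx)
  have hE_pos : ∀ x, 0 ≤ x → 0 < E x := fun x hx =>
    (inv_sqrt_log_two_add_pos hx).trans_le (hinv_le x hx)
  have hc : 0 < E 0 := hE_pos 0 le_rfl
  refine ⟨fun x => E x / E 0, ?_,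
    fun x hx y hy hxy => div_le_div_of_nonneg_right (hanti hx hy hxy) hc.le, div_self hc.ne',
    fun x hx => div_pos (hE_pos x hx) hc, by simpa using hE.div_const (E 0), ?_,
    (E 0)⁻¹, inv_pos.2 hc, fun x hx => ?_⟩
  · simpa only [div_eq_inv_mul, smul_eq_mul] using hconv.smul (inv_nonneg.2 hc.le)
  · refine squeeze_zero' ?_ ?_ (by simpa using hlim.sqrt.const_mul (E 0))
    · filter_upwards [eventually_ge_atTop 0] with x hx
      exact div_nonneg (hpos x hx).le (div_pos (hE_pos x hx) hc).le
    · filter_upwards [eventually_ge_atTop 0] with x hx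
      rw [div_div_eq_mul_div, mul_div_right_comm, mul_comm]
      exact mul_le_mul_of_nonneg_left (div_le_sqrt_of_sqrt_le (hE_pos x hx) (hsqrt_le x hx)) hc.le
  · rw [inv_div_comm]
    exact div_le_div_of_nonneg_right (hinv_le x hx) hc.le
end

section
/- The modified Bessel function K₀ of the second kind satisfies K₀(t) < −ln(t/2) for all t ∈ (0,1). -/
/-!
Since `cosh u ≥ eᵘ / 2`, the shift `w = u + log (t / 2)` gives
`K₀(t) ≤ ∫_{log (t/2)}^∞ exp (-eʷ) dw`. On `[log (t/2), 0]` the bound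
`e⁻ˢ ≤ 1 - s + s² / 2` integrates to `-log (t/2) - 3/4 + t/2 - t²/16`, and on `(0, ∞)` the bound
`eʷ ≥ 7/8 + 3w/2` (tangent to `1 + w + w²/2` at `w = 1/2`) gives less than `5/16`.
Since `5/16 - 3/4 + t/2 - t²/16 < 0` for `t < 1`, the total is below `-log (t/2)`.
-/

open MeasureTheory

/-- The modified Bessel function of the second kind of order `0`,
via the integral representation `K₀(x) = ∫₀^∞ e^{−x cosh t} dt`. -/
noncomputable def besselK0 (x : ℝ) : ℝ :=
  ∫ t in Set.Ioi (0 : ℝ), Real.exp (-x * Real.cosh t)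

open Set Real

theorem exp_neg_le_one_sub_add_sq_div_two {s : ℝ} (hs : 0 ≤ s) :
    exp (-s) ≤ 1 - s + s ^ 2 / 2 := by
  have hpos : 0 < 1 + s + s ^ 2 / 2 := by positivity
  calc exp (-s) = (exp s)⁻¹ := exp_neg s
    _ ≤ (1 + s + s ^ 2 / 2)⁻¹ := inv_anti₀ hpos (quadratic_le_exp_of_nonneg hs)
    _ ≤ 1 - s + s ^ 2 / 2 := by
      -- `(1 + s + s²/2) (1 - s + s²/2) = 1 + s⁴/4`
      rw [inv_le_iff_one_le_mul₀ hpos]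
      nlinarith [sq_nonneg (s ^ 2)]

theorem setIntegral_comp_add_right_Ioi {E : Type*} [NormedAddCommGroup E] [NormedSpace ℝ E]
    (f : ℝ → E) (a c : ℝ) : ∫ x in Ioi a, f (x + c) = ∫ x in Ioi (a + c), f x := by
  simpa [preimage_add_const_Ioi] using
    (measurePreserving_add_right volume c).setIntegral_preimage_emb
      (measurableEmbedding_addRight c) f (Ioi (a + c))

theorem integrableOn_comp_add_right_Ioi_iff {E : Type*} [NormedAddCommGroup E] {f : ℝ → E}
    {a c : ℝ} : IntegrableOn (fun x => f (x + c)) (Ioi a) ↔ IntegrableOn f (Ioi (a + c)) := by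
  simpa [preimage_add_const_Ioi, Function.comp_def] using
    (measurePreserving_add_right volume c).integrableOn_comp_preimage
      (measurableEmbedding_addRight c) (f := f) (s := Ioi (a + c))

theorem integrableOn_exp_neg_exp_Ioi (a : ℝ) : IntegrableOn (fun w => exp (-exp w)) (Ioi a) := by
  refine ((exp_neg_integrableOn_Ioi a one_pos).const_mul (exp (-1))).mono'
    (by fun_prop : Continuous fun w => exp (-exp w)).aestronglyMeasurable ?_
  filter_upwards with w
  rw [norm_of_nonneg (exp_pos _).le, ← exp_add]
  exact exp_le_exp.2 (by linarith [add_one_le_exp w])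

theorem besselK0_le_integral_exp_neg_exp {x : ℝ} (hx : 0 < x) :
    besselK0 x ≤ ∫ w in Ioi (log (x / 2)), exp (-exp w) := by
  have hcosh (u : ℝ) : exp (u + log (x / 2)) ≤ x * cosh u := by
    rw [exp_add, exp_log (by positivity), cosh_eq]
    nlinarith [exp_pos (-u)]
  have hint : IntegrableOn (fun u => exp (-exp (u + log (x / 2)))) (Ioi 0) :=
    integrableOn_comp_add_right_Ioi_iff.2 (integrableOn_exp_neg_exp_Ioi _)
  rw [← zero_add (log (x / 2)), ← setIntegral_comp_add_right_Ioi]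
  refine integral_mono_of_nonneg (ae_of_all _ fun u => (exp_pos _).le) hint
    (ae_of_all _ fun u => exp_le_exp.2 ?_)
  simpa [neg_mul] using hcosh u

theorem intervalIntegral_exp_neg_exp_le {a : ℝ} (ha : a ≤ 0) :
    ∫ w in a..0, exp (-exp w) ≤ -a - 3 / 4 + exp a - exp a ^ 2 / 4 := by
  have hcont : Continuous fun w => 1 - exp w + exp w ^ 2 / 2 := by fun_prop
  have hFTC : ∫ w in a..0, (1 - exp w + exp w ^ 2 / 2) = -a - 3 / 4 + exp a - exp a ^ 2 / 4 := by
    rw [intervalIntegral.integral_eq_sub_of_hasDerivAt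
      (f := fun w => w - exp w + exp w ^ 2 / 4) (fun w _ => ?_) (hcont.intervalIntegrable _ _)]
    · simp only [exp_zero]; ring
    · exact (((hasDerivAt_id' w).sub (hasDerivAt_exp w)).add
        (((hasDerivAt_exp w).pow 2).div_const 4)).congr_deriv (by push_cast; ring)
  calc ∫ w in a..0, exp (-exp w) ≤ ∫ w in a..0, (1 - exp w + exp w ^ 2 / 2) :=
        intervalIntegral.integral_mono_on ha
          ((by fun_prop : Continuous fun w => exp (-exp w)).intervalIntegrable _ _)
          (hcont.intervalIntegrable _ _)
          fun w _ => exp_neg_le_one_sub_add_sq_div_two (exp_pos w).le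
    _ = _ := hFTC

theorem integral_exp_neg_exp_Ioi_zero_lt : ∫ w in Ioi 0, exp (-exp w) < 5 / 16 := by
  have hlin (w : ℝ) (hw : 0 ≤ w) : 7 / 8 + 3 / 2 * w ≤ exp w := by
    nlinarith [quadratic_le_exp_of_nonneg hw, sq_nonneg (w - 1 / 2)]
  have hmaj : IntegrableOn (fun w => exp (-(7 / 8)) * exp (-(3 / 2) * w)) (Ioi 0) :=
    (exp_neg_integrableOn_Ioi 0 (by norm_num)).const_mul _
  have hexp : 1 + 7 / 8 + (7 / 8) ^ 2 / 2 ≤ exp (7 / 8) := quadratic_le_exp_of_nonneg (by norm_num)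
  calc ∫ w in Ioi 0, exp (-exp w) ≤ ∫ w in Ioi 0, exp (-(7 / 8)) * exp (-(3 / 2) * w) :=
        setIntegral_mono_on (integrableOn_exp_neg_exp_Ioi 0) hmaj measurableSet_Ioi fun w hw => by
          rw [← exp_add]
          exact exp_le_exp.2 (by linarith [hlin w (le_of_lt hw)])
    _ = 2 / 3 * (exp (7 / 8))⁻¹ := by
      rw [integral_const_mul, integral_exp_mul_Ioi (by norm_num), exp_neg]
      simp only [mul_zero, exp_zero]
      ring
    _ < 5 / 16 := by
      rw [← div_eq_mul_inv, div_lt_iff₀ (exp_pos _)]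
      linarith

/-- `K₀(t) < −ln(t/2)` for all `t ∈ (0,1)`. -/
theorem besselK0_lt_neg_log (t : ℝ) (ht : t ∈ Set.Ioo (0 : ℝ) 1) :
    besselK0 t < -Real.log (t / 2) := by
  obtain ⟨ht0, ht1⟩ := ht
  set a := log (t / 2)
  have hexp : exp a = t / 2 := exp_log (by positivity)
  have ha : a ≤ 0 := log_nonpos (by positivity) (by linarith)
  calc besselK0 t ≤ ∫ w in Ioi a, exp (-exp w) := besselK0_le_integral_exp_neg_exp ht0
    _ = (∫ w in a..0, exp (-exp w)) + ∫ w in Ioi 0, exp (-exp w) :=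
        (intervalIntegral.integral_interval_add_Ioi (integrableOn_exp_neg_exp_Ioi a)
          (integrableOn_exp_neg_exp_Ioi 0)).symm
    _ < (-a - 3 / 4 + exp a - exp a ^ 2 / 4) + 5 / 16 :=
        add_lt_add_of_le_of_lt (intervalIntegral_exp_neg_exp_le ha) integral_exp_neg_exp_Ioi_zero_lt
    _ ≤ -a := by
      rw [hexp]
      nlinarith
end

section
/- Let d ≥ 1 and let f : [0,1]^d → ℝ^{d+1} be Lipschitz with Lipschitz constant C_lip(f). Then for any r > 0, the (d+1)-dimensional Lebesgue measure of the open r-neighborhood of the image f([0,1]^d) satisfies |B_r(f([0,1]^d))| ≤ (16√d)^d (C_lip(f)^d + 1)(r + r^{d+1}). -/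
/-!
Cut `[0,1]^d` into `N^d` subcubes of side `1/N`; each lies in the closed ball of radius
`√d/(2N)` about its center. Hence the `r`-neighbourhood of the image is covered by `N^d` balls of
radius `r + C√d/(2N)` about the images of the centers, and each such ball lies in a cube of twice
that side. Taking `N ≈ C√d/(2r)`, but at least `1`, makes the radius at most `2r` while
`N^d ≤ 1 + (C√d/r)^d`.
-/

open MeasureTheory Metric Set
open scoped NNReal ENNReal

variable {ι : Type*} [Fintype ι]

theorem exists_fin_abs_sub_le {N : ℕ} (hN : 0 < N) {x : ℝ} (hx : x ∈ Icc (0 : ℝ) 1) :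
    ∃ k : Fin N, |x - (k + 1 / 2) / N| ≤ 1 / (2 * N) := by
  have hN' : (0 : ℝ) < N := by exact_mod_cast hN
  set k := min ⌊x * N⌋₊ (N - 1) with hk
  refine ⟨⟨k, by omega⟩, ?_⟩
  have hk_le : (k : ℝ) ≤ x * N :=
    (Nat.cast_le.2 (min_le_left _ _)).trans (Nat.floor_le (mul_nonneg hx.1 hN'.le))
  have hle_k : x * N ≤ k + 1 := by
    rcases le_total ⌊x * N⌋₊ (N - 1) with h | h
    · rw [hk, min_eq_left h]
      exact (Nat.lt_floor_add_one _).le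
    · rw [hk, min_eq_right h, Nat.cast_pred hN, sub_add_cancel]
      nlinarith [hx.2]
  have hscale : x - (k + 1 / 2) / N = (x * N - (k + 1 / 2)) * (1 / N) := by field_simp
  rw [Fin.val_mk, hscale, show 1 / (2 * (N : ℝ)) = 1 / 2 * (1 / N) by ring, abs_mul,
    abs_of_pos (one_div_pos.2 hN')]
  gcongr
  rw [abs_le]
  constructor <;> linarith

theorem EuclideanSpace.dist_le_sqrt_card_mul {x y : EuclideanSpace ℝ ι} {ε : ℝ}
    (hε : 0 ≤ ε) (h : ∀ i, |x i - y i| ≤ ε) : dist x y ≤ √(Fintype.card ι) * ε := by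
  rw [EuclideanSpace.dist_eq, ← Real.sqrt_sq hε, ← Real.sqrt_mul (Nat.cast_nonneg _)]
  gcongr
  calc ∑ i, dist (x i) (y i) ^ 2 ≤ ∑ _i : ι, ε ^ 2 := by
        gcongr with i
        rw [Real.dist_eq]
        exact h i
    _ = _ := by simp

theorem EuclideanSpace.volume_closedBall_le (x : EuclideanSpace ℝ ι) {R : ℝ} (hR : 0 ≤ R) :
    volume (closedBall x R) ≤ ENNReal.ofReal ((2 * R) ^ Fintype.card ι) := by
  have hmaps : MapsTo WithLp.ofLp (closedBall x R) (closedBall (WithLp.ofLp x) R) := by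
    simpa using (PiLp.lipschitzWith_ofLp 2 fun _ : ι => ℝ).mapsTo_closedBall x R
  calc volume (closedBall x R) ≤ volume (WithLp.ofLp ⁻¹' closedBall (WithLp.ofLp x) R) :=
        measure_mono hmaps
    _ = volume (closedBall (WithLp.ofLp x) R) :=
        (PiLp.volume_preserving_ofLp ι).measure_preimage measurableSet_closedBall.nullMeasurableSet
    _ = _ := Real.volume_pi_closedBall _ hR

theorem LipschitzOnWith.thickening_image_subset_iUnion_closedBall {α β κ : Type*}
    [PseudoMetricSpace α] [PseudoMetricSpace β] {f : α → β} {K : ℝ≥0} {s : Set α}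
    (hf : LipschitzOnWith K f s) {c : κ → α} (hc : ∀ k, c k ∈ s) {ρ : ℝ}
    (hs : s ⊆ ⋃ k, closedBall (c k) ρ) (r : ℝ) :
    thickening r (f '' s) ⊆ ⋃ k, closedBall (f (c k)) (r + K * ρ) := by
  intro y hy
  obtain ⟨_, ⟨x, hx, rfl⟩, hyx⟩ := mem_thickening_iff.1 hy
  obtain ⟨k, hxk⟩ := mem_iUnion.1 (hs hx)
  refine mem_iUnion.2 ⟨k, ?_⟩
  calc dist y (f (c k)) ≤ dist y (f x) + dist (f x) (f (c k)) := dist_triangle _ _ _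
    _ ≤ r + K * ρ := by
      gcongr
      calc dist (f x) (f (c k)) ≤ K * dist x (c k) := hf.dist_le_mul x hx (c k) (hc k)
        _ ≤ K * ρ := by gcongr; exact hxk

def unitCube (ι : Type*) [Fintype ι] : Set (EuclideanSpace ℝ ι) :=
  {x | ∀ i, x i ∈ Icc (0 : ℝ) 1}

noncomputable def gridCenter (N : ℕ) (k : ι → Fin N) : EuclideanSpace ℝ ι :=
  WithLp.toLp 2 fun i => (k i + 1 / 2) / N

theorem gridCenter_mem_unitCube (N : ℕ) (k : ι → Fin N) : gridCenter N k ∈ unitCube ι := by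
  intro i
  have hk : (k i : ℝ) + 1 ≤ N := by exact_mod_cast (k i).isLt
  have hN : (0 : ℝ) < N := by linarith [(k i).val.cast_nonneg (α := ℝ)]
  simp only [gridCenter, mem_Icc]
  constructor
  · positivity
  · rw [div_le_one hN]; linarith

theorem unitCube_subset_iUnion_closedBall_gridCenter {N : ℕ} (hN : 0 < N) :
    unitCube ι ⊆
      ⋃ k : ι → Fin N, closedBall (gridCenter N k) (√(Fintype.card ι) / (2 * N)) := by
  intro x hx
  choose k hk using fun i => exists_fin_abs_sub_le hN (hx i)
  refine mem_iUnion.2 ⟨k, ?_⟩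
  rw [mem_closedBall, div_eq_mul_one_div]
  exact EuclideanSpace.dist_le_sqrt_card_mul (by positivity) hk

theorem volume_thickening_image_unitCube_le {κ : Type*} [Fintype κ]
    {f : EuclideanSpace ℝ ι → EuclideanSpace ℝ κ} {K : ℝ≥0}
    (hf : LipschitzOnWith K f (unitCube ι)) {N : ℕ} (hN : 0 < N) {r : ℝ} (hr : 0 ≤ r) :
    volume (thickening r (f '' unitCube ι)) ≤ (N : ℝ≥0∞) ^ Fintype.card ι *
      ENNReal.ofReal ((2 * (r + K * (√(Fintype.card ι) / (2 * N)))) ^ Fintype.card κ) := by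
  classical
  calc volume (thickening r (f '' unitCube ι))
      ≤ volume (⋃ k : ι → Fin N,
          closedBall (f (gridCenter N k)) (r + K * (√(Fintype.card ι) / (2 * N)))) :=
        measure_mono (hf.thickening_image_subset_iUnion_closedBall (gridCenter_mem_unitCube N)
          (unitCube_subset_iUnion_closedBall_gridCenter hN) r)
    _ ≤ ∑ k : ι → Fin N,
          volume (closedBall (f (gridCenter N k)) (r + K * (√(Fintype.card ι) / (2 * N)))) :=
        measure_iUnion_fintype_le _ _
    _ ≤ ∑ _k : ι → Fin N,
          ENNReal.ofReal ((2 * (r + K * (√(Fintype.card ι) / (2 * N)))) ^ Fintype.card κ) :=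
        Finset.sum_le_sum fun k _ => EuclideanSpace.volume_closedBall_le _ (by positivity)
    _ = _ := by simp

theorem exists_nat_pos_le_two_mul_le_max_one (t : ℝ) :
    ∃ N : ℕ, 0 < N ∧ t ≤ 2 * N ∧ (N : ℝ) ≤ max 1 t := by
  refine ⟨max 1 ⌈t / 2⌉₊, by positivity, ?_, ?_⟩
  · push_cast
    linarith [Nat.le_ceil (t / 2), le_max_right (1 : ℝ) ⌈t / 2⌉₊]
  · push_cast
    refine max_le (le_max_left _ _) ?_
    rcases le_or_gt t 2 with ht | ht
    · exact le_max_of_le_left (by exact_mod_cast Nat.ceil_le.2 (by linarith))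
    · exact le_max_of_le_right (by linarith [Nat.ceil_lt_add_one (by linarith : 0 ≤ t / 2)])

theorem pow_mul_four_mul_pow_succ_le {d : ℕ} (hd : 1 ≤ d) {a r N : ℝ} (ha : 0 ≤ a)
    (hr : 0 < r) (hN₀ : 0 ≤ N) (hN : N ≤ max 1 (a * √d / r)) :
    N ^ d * (4 * r) ^ (d + 1) ≤ (16 * √d) ^ d * (a ^ d + 1) * (r + r ^ (d + 1)) := by
  have hs : 1 ≤ √d ^ d := one_le_pow₀ (Real.one_le_sqrt.2 (by exact_mod_cast hd))
  have h16 : (4 : ℝ) ^ (d + 1) ≤ 16 ^ d := by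
    calc (4 : ℝ) ^ (d + 1) ≤ 4 ^ (2 * d) := pow_le_pow_right₀ (by norm_num) (by omega)
      _ = 16 ^ d := by rw [pow_mul]; norm_num
  have hNd : N ^ d ≤ 1 + (a * √d / r) ^ d := by
    refine (pow_le_pow_left₀ hN₀ hN d).trans ?_
    rcases max_cases 1 (a * √d / r) with ⟨h, -⟩ | ⟨h, -⟩ <;> rw [h]
    · simp [pow_nonneg (by positivity : 0 ≤ a * √d / r)]
    · linarith
  calc N ^ d * (4 * r) ^ (d + 1) ≤ (1 + (a * √d / r) ^ d) * (4 * r) ^ (d + 1) := by gcongr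
    _ = 4 ^ (d + 1) * (r ^ (d + 1) + √d ^ d * a ^ d * r) := by
      rw [div_pow, mul_pow 4 r, pow_succ r]; field_simp; ring
    _ ≤ 16 ^ d * (√d ^ d * (a ^ d + 1) * (r + r ^ (d + 1))) := by
      gcongr
      have hA := pow_nonneg ha d
      have hrd := (pow_pos hr (d + 1)).le
      nlinarith [mul_nonneg (sub_nonneg.2 hs) hrd,
        mul_nonneg (mul_nonneg (zero_le_one.trans hs) hA) hrd]
    _ = (16 * √d) ^ d * (a ^ d + 1) * (r + r ^ (d + 1)) := by ring

/-- Volume bound for the `r`-neighborhood of the image of the unit cube under a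
Lipschitz map `f : [0,1]^d → ℝ^{d+1}`. -/
theorem volume_thickening_lipschitz_image (d : ℕ) (hd : 1 ≤ d) (C : NNReal)
    (f : EuclideanSpace ℝ (Fin d) → EuclideanSpace ℝ (Fin (d + 1)))
    (hf : LipschitzOnWith C f {x : EuclideanSpace ℝ (Fin d) | ∀ i, x i ∈ Set.Icc (0:ℝ) 1})
    (r : ℝ) (hr : 0 < r) :
    volume (Metric.thickening r
        (f '' {x : EuclideanSpace ℝ (Fin d) | ∀ i, x i ∈ Set.Icc (0:ℝ) 1}))
      ≤ ENNReal.ofReal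
          ((16 * Real.sqrt d) ^ d * ((C : ℝ) ^ d + 1) * (r + r ^ (d + 1))) := by
  obtain ⟨N, hN, hN_ge, hN_le⟩ := exists_nat_pos_le_two_mul_le_max_one (C * √d / r)
  have hN' : (0 : ℝ) < N := by exact_mod_cast hN
  have hR : 2 * (r + C * (√d / (2 * N))) ≤ 4 * r := by
    rw [div_le_iff₀ hr] at hN_ge
    have : C * √d / (2 * N) ≤ r := by rw [div_le_iff₀ (by positivity)]; linarith
    rw [← mul_div_assoc]
    linarith
  calc volume (thickening r (f '' unitCube (Fin d)))
      ≤ (N : ℝ≥0∞) ^ d * ENNReal.ofReal ((2 * (r + C * (√d / (2 * N)))) ^ (d + 1)) := by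
        simpa using volume_thickening_image_unitCube_le hf hN hr.le
    _ ≤ ENNReal.ofReal (N ^ d * (4 * r) ^ (d + 1)) := by
        rw [ENNReal.ofReal_mul (by positivity), ENNReal.ofReal_pow hN'.le,
          ENNReal.ofReal_natCast]
        gcongr _ * ENNReal.ofReal (?_ ^ _)
    _ ≤ _ := ENNReal.ofReal_le_ofReal
        (pow_mul_four_mul_pow_succ_le hd C.coe_nonneg hr hN'.le hN_le)
end

section
/- Let I₁ = (s₁, s₁+ℓ₁) and I₂ ⊂ (s₁+ℓ₁+d, ∞) be intervals with ℓ₁, d > 0, and let k : ℝ → ℝ satisfy |k(z)| ≤ C/(1+|z|). Then ∫_{I₁} ∫_{I₂} k(x−y)² dy dx ≤ C² ln((1 + d + ℓ₁)/(1 + d)). -/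
/-!
Enlarging `I₂` to `(a, ∞)` with `a = s₁ + ℓ₁ + d`, where `|x - y| = y - x`, the inner integral is at
most `C² ∫_a^∞ (1 + y - x)⁻² dy = C² / (1 + a - x)`. Integrating this over `x ∈ (s₁, s₁ + ℓ₁)`
gives exactly `C² log ((1 + d + ℓ₁) / (1 + d))`.
-/

open MeasureTheory Filter Set Topology

lemma sq_le_of_abs_le_div_one_add_abs {k : ℝ → ℝ} {C : ℝ}
    (hbound : ∀ z, |k z| ≤ C / (1 + |z|)) (z : ℝ) : k z ^ 2 ≤ C ^ 2 * ((1 + |z|) ^ 2)⁻¹ := by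
  rw [← sq_abs, ← inv_pow, ← mul_pow]
  exact pow_le_pow_left₀ (abs_nonneg _) (hbound z) 2

lemma hasDerivAt_neg_inv_add {c y : ℝ} (h : y + c ≠ 0) :
    HasDerivAt (fun y => -(y + c)⁻¹) ((y + c) ^ 2)⁻¹ y :=
  (((hasDerivAt_id' y).add_const c).fun_inv h).fun_neg.congr_deriv (by ring)

lemma tendsto_neg_inv_add_atTop (c : ℝ) : Tendsto (fun y : ℝ => -(y + c)⁻¹) atTop (𝓝 0) := by
  simpa using (tendsto_atTop_add_const_right atTop c tendsto_id).inv_tendsto_atTop.neg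

lemma integrableOn_Ioi_inv_add_sq {a c : ℝ} (h : 0 < a + c) :
    IntegrableOn (fun y => ((y + c) ^ 2)⁻¹) (Ioi a) :=
  integrableOn_Ioi_deriv_of_nonneg'
    (fun y hy => hasDerivAt_neg_inv_add (by linarith [mem_Ici.mp hy]))
    (fun _ _ => by positivity) (tendsto_neg_inv_add_atTop c)

lemma integral_Ioi_inv_add_sq {a c : ℝ} (h : 0 < a + c) :
    ∫ y in Ioi a, ((y + c) ^ 2)⁻¹ = (a + c)⁻¹ := by
  rw [integral_Ioi_of_hasDerivAt_of_nonneg'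
    (fun y hy => hasDerivAt_neg_inv_add (by linarith [mem_Ici.mp hy]))
    (fun _ _ => by positivity) (tendsto_neg_inv_add_atTop c)]
  ring

lemma setIntegral_sq_comp_sub_le {k : ℝ → ℝ} {C x a : ℝ} {S : Set ℝ}
    (hbound : ∀ z, |k z| ≤ C / (1 + |z|)) (hxa : x < a) (hS : S ⊆ Ioi a) :
    ∫ y in S, k (x - y) ^ 2 ≤ C ^ 2 * (1 + a - x)⁻¹ := by
  have h_pos : 0 < a + (1 - x) := by linarith
  have h_eq : EqOn (fun y => C ^ 2 * ((y + (1 - x)) ^ 2)⁻¹)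
      (fun y => C ^ 2 * ((1 + |x - y|) ^ 2)⁻¹) (Ioi a) := fun y hy => by
    dsimp only
    rw [abs_sub_comm, abs_of_pos (by linarith [mem_Ioi.mp hy])]
    ring_nf
  have h_int : IntegrableOn (fun y => C ^ 2 * ((1 + |x - y|) ^ 2)⁻¹) (Ioi a) :=
    IntegrableOn.congr_fun ((integrableOn_Ioi_inv_add_sq h_pos).const_mul _) h_eq
      measurableSet_Ioi
  calc ∫ y in S, k (x - y) ^ 2
      ≤ ∫ y in S, C ^ 2 * ((1 + |x - y|) ^ 2)⁻¹ :=
        integral_mono_of_nonneg (.of_forall fun _ => sq_nonneg _) (h_int.mono_set hS)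
          (.of_forall fun y => sq_le_of_abs_le_div_one_add_abs hbound (x - y))
    _ ≤ ∫ y in Ioi a, C ^ 2 * ((1 + |x - y|) ^ 2)⁻¹ :=
        setIntegral_mono_set h_int (.of_forall fun _ => by positivity) hS.eventuallyLE
    _ = ∫ y in Ioi a, C ^ 2 * ((y + (1 - x)) ^ 2)⁻¹ :=
        (setIntegral_congr_fun measurableSet_Ioi h_eq).symm
    _ = C ^ 2 * (1 + a - x)⁻¹ := by
        rw [integral_const_mul, integral_Ioi_inv_add_sq h_pos]
        ring_nf

lemma integrableOn_Ioo_inv_const_sub {s t c : ℝ} (htc : t < c) :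
    IntegrableOn (fun x => (c - x)⁻¹) (Ioo s t) :=
  (ContinuousOn.integrableOn_Icc (continuousOn_const.sub continuousOn_id |>.inv₀
    fun _ hx => (sub_pos.mpr (hx.2.trans_lt htc)).ne')).mono_set Ioo_subset_Icc_self

lemma integral_Ioo_inv_const_sub {s t c : ℝ} (hst : s ≤ t) (htc : t < c) :
    ∫ x in Ioo s t, (c - x)⁻¹ = Real.log ((c - s) / (c - t)) := by
  rw [← integral_Ioc_eq_integral_Ioo, ← intervalIntegral.integral_of_le hst,
    intervalIntegral.integral_comp_sub_left (fun x => x⁻¹),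
    integral_inv_of_pos (by linarith) (by linarith)]

theorem crossterm_hs_bound_general (s₁ ℓ₁ d C : ℝ) (hℓ : 0 < ℓ₁) (hd : 0 < d)
    (I₂ : Set ℝ) (hsub : I₂ ⊆ Set.Ioi (s₁ + ℓ₁ + d))
    (k : ℝ → ℝ) (hbound : ∀ z, |k z| ≤ C / (1 + |z|)) :
    (∫ x in Set.Ioo s₁ (s₁ + ℓ₁), ∫ y in I₂, (k (x - y)) ^ 2)
      ≤ C ^ 2 * Real.log ((1 + d + ℓ₁) / (1 + d)) := by
  set a := s₁ + ℓ₁ + d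
  have h_end : s₁ + ℓ₁ < 1 + a := by linarith
  calc (∫ x in Ioo s₁ (s₁ + ℓ₁), ∫ y in I₂, k (x - y) ^ 2)
      ≤ ∫ x in Ioo s₁ (s₁ + ℓ₁), C ^ 2 * (1 + a - x)⁻¹ := by
        refine integral_mono_of_nonneg (.of_forall fun _ => integral_nonneg fun _ => sq_nonneg _)
          ((integrableOn_Ioo_inv_const_sub h_end).const_mul _) ?_
        filter_upwards [ae_restrict_mem measurableSet_Ioo] with x hx
        exact setIntegral_sq_comp_sub_le hbound (by linarith [hx.2]) hsub
    _ = C ^ 2 * Real.log ((1 + d + ℓ₁) / (1 + d)) := by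
        rw [integral_const_mul, integral_Ioo_inv_const_sub (by linarith) h_end]
        congr 3 <;> ring

/-- Cross-term Hilbert–Schmidt bound: for an interval `I₁ = (s₁, s₁+ℓ₁)` and a set
`I₂ ⊂ (s₁+ℓ₁+d, ∞)`, and a kernel `k` with `|k(z)| ≤ C/(1+|z|)`,
`∫_{I₁}∫_{I₂} k(x−y)² dy dx ≤ C² ln((1+d+ℓ₁)/(1+d))`. -/
theorem crossterm_hs_bound (s₁ ℓ₁ d C : ℝ) (hℓ : 0 < ℓ₁) (hd : 0 < d)
    (I₂ : Set ℝ) (hI₂ : MeasurableSet I₂) (hsub : I₂ ⊆ Set.Ioi (s₁ + ℓ₁ + d))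
    (k : ℝ → ℝ) (hk : Measurable k) (hbound : ∀ z, |k z| ≤ C / (1 + |z|)) :
    (∫ x in Set.Ioo s₁ (s₁ + ℓ₁), ∫ y in I₂, (k (x - y)) ^ 2)
      ≤ C ^ 2 * Real.log ((1 + d + ℓ₁) / (1 + d)) :=
  crossterm_hs_bound_general s₁ ℓ₁ d C hℓ hd I₂ hsub k hbound
end
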